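/- Recurrence satisfied by the left-hand side of the finite Jacobi identity: let J(L) = ∑_{l=0}^{L} a^{-l} (1 + a^{2l+1})/(1+a) q^{T_l}. Then for all L ≥ 0: -a q^{9+3L} J(L) + q^{7+2L}(1 - a + a² + a q^{2+L}) J(L+1) - (1 - a + a²) q^{4+L}(q^{3+L} - 1) J(L+2) + (-a - q^{4+L} + a q^{4+L} - a² q^{4+L}) J(L+3) + a J(L+4) = 0. -/

import Mathlib

open Finset

/-- The field of rational functions in two indeterminates `a` and `q` over `ℚ`. -/
noncomputable abbrev K2 : Type := RatFunc (Polynomial ℚ)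

/-- The indeterminate `q`. -/
noncomputable def q : K2 := RatFunc.X

/-- The indeterminate `a`. -/
noncomputable def a : K2 := RatFunc.C Polynomial.X

/-- Triangular number `T m = m(m+1)/2`. -/
def T (m : ℤ) : ℤ := m * (m + 1) / 2

/-- The Gaussian binomial coefficient in base `q`: `C(N, n) = (q^{N-n+1};q)_n / (q;q)_n`
for `n ≥ 0`, and `0` when out of range (`n < 0`; for `0 ≤ N < n` the product contains
the factor `1 - q^0 = 0`, so it vanishes). -/
noncomputable def qbin (N n : ℤ) : K2 :=
  if n < 0 then 0
  else ∏ r ∈ Finset.range n.toNat, (1 - q ^ (N - (r : ℤ))) / (1 - q ^ ((r : ℤ) + 1))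

/-- Right-hand side of the finite Jacobi identity: the sum over all `i, j, k ≥ 0`;
terms with `i > L`, `j > L` or `k > L` vanish since the corresponding `qbin` is `0`,
so the ranges below capture the full triple sum. -/
noncomputable def S (L : ℕ) : K2 :=
  ∑ i ∈ Finset.range (L + 1), ∑ j ∈ Finset.range (L + 1), ∑ k ∈ Finset.range (L + 1),
    a ^ ((i : ℤ) - j) * (-1) ^ k * q ^ (T i + T j + T k) *
      qbin ((L : ℤ) - k) i * qbin ((L : ℤ) - i) j * qbin ((L : ℤ) - j) k

/-- Left-hand side of the finite Jacobi identity. -/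
noncomputable def J (L : ℕ) : K2 :=
  ∑ l ∈ Finset.range (L + 1), a ^ (-(l : ℤ)) * ((1 + a ^ (2 * l + 1)) / (1 + a)) * q ^ (T l)

/-!
Writing `Θ(x, L) = ∑_{l ≤ L} x^l q^{T_l}`, one has `J L = (Θ(a⁻¹, L) + a Θ(a, L)) / (1 + a)`, so it
suffices that the recurrence kills `Θ(x, ·)` for `x = a` and `x = a⁻¹`. Its coefficients sum to zero,
so only the terms `x^{L+k} q^{T_{L+k}}`, `1 ≤ k ≤ 4`, survive; by `T_{L+k} = T_L + kL + T_k` their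
combination is `x^{L+1} q^{T_L + 4L + 10} (1 + x) (x - a) (a x - 1)`.
-/

theorem T_add (m n : ℤ) : T (m + n) = T m + T n + m * n := by
  have h : ∀ k : ℤ, 2 * T k = k * (k + 1) := fun k =>
    Int.mul_ediv_cancel' (Int.even_mul_succ_self k).two_dvd
  linarith [h m, h n, h (m + n)]

section PartialThetaSum

variable {K : Type*} [Field K]

def partialThetaSum (q x : K) (L : ℕ) : K := ∑ l ∈ range (L + 1), x ^ l * q ^ T l

theorem partialThetaSum_succ (q x : K) (L : ℕ) :
    partialThetaSum q x (L + 1) = partialThetaSum q x L + x ^ (L + 1) * q ^ T (L + 1 : ℕ) :=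
  sum_range_succ _ _

theorem pow_mul_zpow_T_add {q : K} (hq : q ≠ 0) (x : K) (L k : ℕ) :
    x ^ (L + k) * q ^ T (L + k : ℕ) = x ^ L * q ^ T L * (x ^ k * q ^ (k * L) * q ^ T k) := by
  rw [Nat.cast_add, T_add, zpow_add₀ hq, zpow_add₀ hq, pow_add, ← Nat.cast_mul, zpow_natCast]
  ring

theorem partialThetaSum_recurrence {q : K} (hq : q ≠ 0) {a x : K}
    (hx : (x - a) * (a * x - 1) = 0) (L : ℕ) :
    -(a * q ^ (9 + 3 * L) * partialThetaSum q x L) +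
        q ^ (7 + 2 * L) * (1 - a + a ^ 2 + a * q ^ (2 + L)) * partialThetaSum q x (L + 1) -
        (1 - a + a ^ 2) * q ^ (4 + L) * (q ^ (3 + L) - 1) * partialThetaSum q x (L + 2) +
        (-a - q ^ (4 + L) + a * q ^ (4 + L) - a ^ 2 * q ^ (4 + L)) * partialThetaSum q x (L + 3) +
        a * partialThetaSum q x (L + 4) = 0 := by
  have T1 : T 1 = 1 := rfl
  have T2 : T 2 = 3 := rfl
  have T3 : T 3 = 6 := rfl
  have T4 : T 4 = 10 := rfl
  simp only [partialThetaSum_succ, Nat.add_assoc, Nat.reduceAdd, pow_mul_zpow_T_add hq x L,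
    Nat.cast_one, Nat.cast_ofNat, T1, T2, T3, T4, zpow_ofNat]
  linear_combination x ^ L * q ^ T L * q ^ (4 * L + 10) * x * (1 + x) * hx

end PartialThetaSum

theorem zpow_neg_mul_geom_div {K : Type*} [Field K] {a : K} (ha : a ≠ 0) (l : ℕ) :
    a ^ (-(l : ℤ)) * ((1 + a ^ (2 * l + 1)) / (1 + a)) = (a⁻¹ ^ l + a * a ^ l) / (1 + a) := by
  rw [zpow_neg, zpow_natCast, inv_pow]
  field_simp
  ring

theorem a_ne_zero : a ≠ 0 :=
  (RatFunc.C_injective.ne_iff' (map_zero _)).mpr Polynomial.X_ne_zero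

theorem q_ne_zero : q ≠ 0 :=
  RatFunc.algebraMap_ne_zero Polynomial.X_ne_zero

theorem J_eq_partialThetaSum (L : ℕ) :
    J L = (partialThetaSum q a⁻¹ L + a * partialThetaSum q a L) / (1 + a) := by
  simp only [J, partialThetaSum, zpow_neg_mul_geom_div a_ne_zero, mul_sum, ← sum_add_distrib,
    sum_div]
  exact sum_congr rfl fun l _ => by ring

/-- The same recurrence of order 4 is satisfied by the left-hand side of the
finite Jacobi identity. -/
theorem finite_jacobi_lhs_recurrence (L : ℕ) :
    -(a * q ^ (9 + 3 * L) * J L) +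
        q ^ (7 + 2 * L) * (1 - a + a ^ 2 + a * q ^ (2 + L)) * J (L + 1) -
        (1 - a + a ^ 2) * q ^ (4 + L) * (q ^ (3 + L) - 1) * J (L + 2) +
        (-a - q ^ (4 + L) + a * q ^ (4 + L) - a ^ 2 * q ^ (4 + L)) * J (L + 3) +
        a * J (L + 4) = 0 := by
  have h_inv := partialThetaSum_recurrence q_ne_zero (x := a⁻¹)
    (by rw [mul_inv_cancel₀ a_ne_zero, sub_self, mul_zero]) L
  have h_self := partialThetaSum_recurrence q_ne_zero (x := a) (by rw [sub_self, zero_mul]) L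
  simp only [J_eq_partialThetaSum]
  linear_combination (h_inv + a * h_self) / (1 + a)
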